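/- Let k be a field and let a, b, c, b', c', α be natural numbers with 0 < b' < b, 0 < c' < c, 0 < α < a. In k[x, y, z], the ideal L = (x^a − y^{b'}z^{c'}, y^b, z^c, x^{a−α}y^{b−b'}, x^{a−α}z^{c−c'}) is generated by the five 4×4 sub-Pfaffians (equivalently, the square roots of the principal 4×4 minors) of the 5×5 alternating matrix M with M₁₃ = −y^{b'}, M₁₅ = x^{a−α}, M₂₃ = −z^{c−c'}, M₂₄ = y^{b−b'}, M₃₄ = x^{α}, M₄₅ = z^{c'}, all other above-diagonal entries zero, and M antisymmetric. -/

import Mathlib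

open MvPolynomial Matrix

/-- The Pfaffian of a 4×4 alternating matrix. -/
def pfaffian4 {R : Type*} [CommRing R] (A : Matrix (Fin 4) (Fin 4) R) : R :=
  A 0 1 * A 2 3 - A 0 2 * A 1 3 + A 0 3 * A 1 2

/-- The 4×4 sub-Pfaffian of a 5×5 alternating matrix obtained by deleting
row `i` and column `i`. -/
def subPfaffian5 {R : Type*} [CommRing R] (M : Matrix (Fin 5) (Fin 5) R)
    (i : Fin 5) : R :=
  pfaffian4 (M.submatrix i.succAbove i.succAbove)

/-- The 5×5 alternating matrix of the paper, with entries in `k[x,y,z]`. -/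
noncomputable def pfMatrix (k : Type*) [Field k] (a b c b' c' α : ℕ) :
    Matrix (Fin 5) (Fin 5) (MvPolynomial (Fin 3) k) :=
  !![0, 0, -(X 1 ^ b'), 0, X 0 ^ (a - α);
     0, 0, -(X 2 ^ (c - c')), X 1 ^ (b - b'), 0;
     X 1 ^ b', X 2 ^ (c - c'), 0, X 0 ^ α, 0;
     0, -(X 1 ^ (b - b')), -(X 0 ^ α), 0, X 2 ^ c';
     -(X 0 ^ (a - α)), 0, 0, -(X 2 ^ c'), 0]

/-! Most terms of the sub-Pfaffians of `pfMatrix` vanish, and once the split exponents recombine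
(`b' ≤ b`, `c' ≤ c`, `α ≤ a`) each sub-Pfaffian is, up to sign, one of the five listed generators.
Generating sets that agree up to sign span the same ideal. -/

theorem Ideal.span_union_neg {R : Type*} [Ring R] (s : Set R) :
    Ideal.span (s ∪ -s) = Ideal.span s := by
  simp only [Ideal.span_union, Ideal.span, Submodule.span_neg, sup_idem]

theorem Ideal.span_eq_span_of_subset_union_neg {R : Type*} [Ring R] {s t : Set R}
    (hst : s ⊆ t ∪ -t) (hts : t ⊆ s ∪ -s) : Ideal.span s = Ideal.span t :=
  le_antisymm ((Ideal.span_mono hst).trans (Ideal.span_union_neg t).le)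
    ((Ideal.span_mono hts).trans (Ideal.span_union_neg s).le)

section SubPfaffian5

variable {R : Type*} [CommRing R] (M : Matrix (Fin 5) (Fin 5) R)

theorem subPfaffian5_zero :
    subPfaffian5 M 0 = M 1 2 * M 3 4 - M 1 3 * M 2 4 + M 1 4 * M 2 3 := rfl

theorem subPfaffian5_one :
    subPfaffian5 M 1 = M 0 2 * M 3 4 - M 0 3 * M 2 4 + M 0 4 * M 2 3 := rfl

theorem subPfaffian5_two :
    subPfaffian5 M 2 = M 0 1 * M 3 4 - M 0 3 * M 1 4 + M 0 4 * M 1 3 := rfl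

theorem subPfaffian5_three :
    subPfaffian5 M 3 = M 0 1 * M 2 4 - M 0 2 * M 1 4 + M 0 4 * M 1 2 := rfl

theorem subPfaffian5_four :
    subPfaffian5 M 4 = M 0 1 * M 2 3 - M 0 2 * M 1 3 + M 0 3 * M 1 2 := rfl

end SubPfaffian5

theorem pfMatrix_transpose (k : Type*) [Field k] (a b c b' c' α : ℕ) :
    (pfMatrix k a b c b' c' α)ᵀ = -pfMatrix k a b c b' c' α := by
  ext i j
  fin_cases i <;> fin_cases j <;> simp [pfMatrix]

theorem subPfaffian5_pfMatrix {k : Type*} [Field k] {a b c b' c' α : ℕ}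
    (hb : b' ≤ b) (hc : c' ≤ c) (ha : α ≤ a) :
    subPfaffian5 (pfMatrix k a b c b' c' α) =
      ![-(X 2 ^ c), X 0 ^ a - X 1 ^ b' * X 2 ^ c', X 0 ^ (a - α) * X 1 ^ (b - b'),
        -(X 0 ^ (a - α) * X 2 ^ (c - c')), X 1 ^ b] := by
  obtain ⟨b, rfl⟩ := Nat.exists_eq_add_of_le hb
  obtain ⟨c, rfl⟩ := Nat.exists_eq_add_of_le hc
  obtain ⟨a, rfl⟩ := Nat.exists_eq_add_of_le ha
  funext i
  fin_cases i <;>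
    simp [subPfaffian5_zero, subPfaffian5_one, subPfaffian5_two, subPfaffian5_three,
      subPfaffian5_four, pfMatrix, pow_add] <;> ring

theorem stmt_13 (k : Type*) [Field k] (a b c b' c' α : ℕ)
    (hb'b : b' < b) (hc'c : c' < c)
    (hαa : α < a) :
    (pfMatrix k a b c b' c' α)ᵀ = -(pfMatrix k a b c b' c' α) ∧
    (Ideal.span {X 0 ^ a - X 1 ^ b' * X 2 ^ c', X 1 ^ b, X 2 ^ c,
        X 0 ^ (a - α) * X 1 ^ (b - b'), X 0 ^ (a - α) * X 2 ^ (c - c')} :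
        Ideal (MvPolynomial (Fin 3) k)) =
      Ideal.span {p | ∃ i : Fin 5, subPfaffian5 (pfMatrix k a b c b' c' α) i = p} := by
  refine ⟨pfMatrix_transpose k a b c b' c' α, ?_⟩
  change _ = Ideal.span (Set.range _)
  rw [subPfaffian5_pfMatrix hb'b.le hc'c.le hαa.le]
  simp only [Matrix.range_cons, Matrix.range_empty, Set.union_empty, ← Set.insert_eq]
  apply Ideal.span_eq_span_of_subset_union_neg <;> simp [Set.insert_subset_iff]
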